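/- arXiv:1902.01469 — 2 statements merged into one kernel-verified Lean document; each statement's English description precedes it below -/
import Mathlib

section
/- Let κ be an infinite cardinal, identified with the set of ordinals below κ, let K = {A ⊆ κ : |A| < κ}, and fix x < κ. Let K_{≥x} = {A ∈ K : A ≠ ∅ and min A = x}. Then there is a bijection from K onto K_{≥x} that is an asymorphism from the macrocube K(κ,K) onto the subballean of κ_K^♭ on K_{≥x}. -/
open Set Cardinal

universe u v

variable {X : Type*} {Y : Type*} {P : Type*} {Q : Type*}

/-- The ball around a set: `B(A, r) = ⋃_{y ∈ A} B(y, r)`. -/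
def ballSet (B : X → P → Set X) (A : Set X) (r : P) : Set X := ⋃ y ∈ A, B y r

/-- `B : X → P → Set X` is the ball structure of a ballean with support `X` and radii `P`. -/
def IsBalleanBall (B : X → P → Set X) : Prop :=
  Nonempty P ∧ (∀ x r, x ∈ B x r) ∧ (∀ x y r, x ∈ B y r ↔ y ∈ B x r) ∧
    (∀ r s, ∃ t, ∀ x, ballSet B (B x r) s ⊆ B x t)

/-- A map between balleans is coarse. -/
def IsCoarse (BX : X → P → Set X) (BY : Y → Q → Set Y) (f : X → Y) : Prop :=
  ∀ r, ∃ s, ∀ x, f '' BX x r ⊆ BY (f x) s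

/-- A map between balleans is effectively proper. -/
def IsEffectivelyProper (BX : X → P → Set X) (BY : Y → Q → Set Y) (f : X → Y) : Prop :=
  ∀ s, ∃ r, ∀ x, f ⁻¹' BY (f x) s ⊆ BX x r

/-- A coarse embedding is a map that is both coarse and effectively proper. -/
def IsCoarseEmbedding (BX : X → P → Set X) (BY : Y → Q → Set Y) (f : X → Y) : Prop :=
  IsCoarse BX BY f ∧ IsEffectivelyProper BX BY f

/-- An asymorphism is a bijective map that is both coarse and effectively proper. -/
def IsAsymorphism (BX : X → P → Set X) (BY : Y → Q → Set Y) (f : X → Y) : Prop :=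
  Function.Bijective f ∧ IsCoarse BX BY f ∧ IsEffectivelyProper BX BY f

/-- A subset of a ballean is bounded. -/
def IsBoundedSet (B : X → P → Set X) (A : Set X) : Prop :=
  A = ∅ ∨ ∃ r, ∀ y ∈ A, A ⊆ B y r

/-- A subset of a ballean is large. -/
def IsLargeSet (B : X → P → Set X) (A : Set X) : Prop :=
  ∃ r, ballSet B A r = Set.univ

/-- A subset of a ballean is thick. -/
def IsThickSet (B : X → P → Set X) (A : Set X) : Prop :=
  ∀ r, ∃ x ∈ A, B x r ⊆ A

/-- A subset of a ballean is thin. -/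
def IsThinSet (B : X → P → Set X) (A : Set X) : Prop :=
  ∀ r, ∃ V : Set X, IsBoundedSet B V ∧ ∀ x ∈ A \ V, B x r ∩ A = {x}

/-- A `{0,1}`-valued function on a ballean is slowly oscillating. -/
def IsSlowlyOscillating (B : X → P → Set X) (f : X → Bool) : Prop :=
  ∀ r, ∃ V : Set X, IsBoundedSet B V ∧ ∀ x, x ∉ V → ∀ y ∈ B x r, ∀ z ∈ B x r, f y = f z

/-- A ballean is connected. -/
def IsConnectedBall (B : X → P → Set X) : Prop := ∀ x y, ∃ r, y ∈ B x r

/-- The connected component of a point of a ballean. -/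
def balleanComponent (B : X → P → Set X) (x : X) : Set X := {y | ∃ r, y ∈ B x r}

/-- The ball structure of the hyperballean `exp B`. -/
def expBall (B : X → P → Set X) : Set X → P → Set (Set X) :=
  fun A r => {C | A ⊆ ballSet B C r ∧ C ⊆ ballSet B A r}

/-- The ball structure of the subballean on a subset `S`. -/
def subBall (B : X → P → Set X) (S : Set X) : S → P → Set S :=
  fun y r => {z | (z : X) ∈ B (y : X) r}

/-- An ideal on a set `X`: a family of subsets closed under subsets and finite unions,
containing all finite sets, and not containing `X` itself. -/
def IsIdeal (I : Set (Set X)) : Prop :=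
  (∀ A ∈ I, ∀ B ⊆ A, B ∈ I) ∧ (∀ A ∈ I, ∀ B ∈ I, A ∪ B ∈ I) ∧
    (∀ A : Set X, A.Finite → A ∈ I) ∧ Set.univ ∉ I

/-- The ball structure of the point ideal ballean `X_I`:
`B_I(x,A) = {x}` if `x ∉ A` and `B_I(x,A) = {x} ∪ A` if `x ∈ A`. -/
def pointIdealBall (I : Set (Set X)) : X → I → Set X :=
  fun x A => insert x {y | y ∈ (A : Set X) ∧ x ∈ (A : Set X)}

/-- The ball structure of the `I`-ary ballean `X_{I-ary}`: `B(x,A) = {x} ∪ A`. -/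
def aryBall (I : Set (Set X)) : X → I → Set X :=
  fun x A => insert x (A : Set X)

/-- The ball structure of the ballean `C(X,I)` on `𝒫(X)`: `B_C(Z,K) = {W | Z △ W ⊆ K}`. -/
def cBall (I : Set (Set X)) : Set X → I → Set (Set X) :=
  fun Z K => {W | symmDiff Z W ⊆ (K : Set X)}

/-- The support of the flat hyperballean `X^♭`: all nonempty bounded subsets. -/
def flatSupport (B : X → P → Set X) : Set (Set X) := {A | A.Nonempty ∧ IsBoundedSet B A}

/-!
Since `x` has fewer than `κ` predecessors, `(x, κ)` has cardinality `κ`; fix a bijection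
`e : κ → (x, κ)`. Then `A ↦ {x} ∪ e(A)` maps `K` bijectively onto `K_{≥x}`, with inverse
`C ↦ e⁻¹(C)`. For sets `A, C` of `κ_K` and a radius `S`, all three containing a common point,
`C` lies in the `exp`-ball of radius `S` around `A` exactly when `A △ C ⊆ S`; and
`({x} ∪ e(A)) △ ({x} ∪ e(B)) = e(A △ B)`. So radius `S` of the macrocube corresponds to
radius `{x} ∪ e(S)` of the hyperballean, and radius `S` there to `e⁻¹(S)` back.
-/

open scoped symmDiff

section PointIdealBall

variable {α : Type*} {I : Set (Set α)} {A C : Set α} {S : I}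

lemma ballSet_pointIdealBall_subset (C : Set α) (S : I) :
    ballSet (pointIdealBall I) C S ⊆ C ∪ S := by
  intro y hy
  simp only [ballSet, mem_iUnion, pointIdealBall, mem_insert_iff, mem_ofPred_eq] at hy
  obtain ⟨z, hz, rfl | ⟨hyS, -⟩⟩ := hy
  exacts [Or.inl hz, Or.inr hyS]

lemma union_subset_ballSet_pointIdealBall {x : α} (hC : x ∈ C) (hS : x ∈ (S : Set α)) :
    C ∪ S ⊆ ballSet (pointIdealBall I) C S := by
  rintro y (hy | hy) <;>
    simp only [ballSet, mem_iUnion, pointIdealBall, mem_insert_iff, mem_ofPred_eq]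
  exacts [⟨y, hy, Or.inl rfl⟩, ⟨x, hC, Or.inr ⟨hy, hS⟩⟩]

lemma symmDiff_subset_of_mem_expBall_pointIdealBall
    (h : C ∈ expBall (pointIdealBall I) A S) : A ∆ C ⊆ S :=
  union_subset (sdiff_subset_iff.mpr (h.1.trans (ballSet_pointIdealBall_subset C S)))
    (sdiff_subset_iff.mpr (h.2.trans (ballSet_pointIdealBall_subset A S)))

lemma mem_expBall_pointIdealBall_of_symmDiff_subset {x : α} (hA : x ∈ A) (hC : x ∈ C)
    (hS : x ∈ (S : Set α)) (h : A ∆ C ⊆ S) : C ∈ expBall (pointIdealBall I) A S :=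
  ⟨(sdiff_subset_iff.mp (subset_union_left.trans h)).trans
      (union_subset_ballSet_pointIdealBall hC hS),
    (sdiff_subset_iff.mp (subset_union_right.trans h)).trans
      (union_subset_ballSet_pointIdealBall hA hS)⟩

end PointIdealBall

section InsertImage

variable {α β : Type*} {x : α} {e : β → α}

lemma insert_image_symmDiff (he : e.Injective) (hx : x ∉ range e) (A B : Set β) :
    insert x (e '' A) ∆ insert x (e '' B) = e '' (A ∆ B) := by
  have hxA : ∀ A : Set β, x ∉ e '' A := fun A hxA => hx (image_subset_range e A hxA)
  rw [image_symmDiff he]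
  ext y
  by_cases hy : y = x
  · subst hy; simp [Set.mem_symmDiff, hxA]
  · simp [Set.mem_symmDiff, hy]

lemma preimage_insert_image (he : e.Injective) (hx : x ∉ range e) (A : Set β) :
    e ⁻¹' insert x (e '' A) = A := by
  rw [insert_eq, preimage_union, preimage_singleton_eq_empty.mpr hx, empty_union,
    he.preimage_image]

lemma notMem_range_of_range_subset_Ioi [Preorder α] (hx : range e ⊆ Ioi x) : x ∉ range e :=
  fun h => lt_irrefl x (hx h)

lemma isLeast_insert_image [Preorder α] (hx : range e ⊆ Ioi x) (A : Set β) :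
    IsLeast (insert x (e '' A)) x := by
  refine ⟨mem_insert x _, ?_⟩
  rintro y (rfl | ⟨a, -, rfl⟩)
  exacts [le_rfl, (hx (mem_range_self a)).le]

lemma insert_image_preimage [PartialOrder α] (hx : range e = Ioi x) {C : Set α}
    (hC : IsLeast C x) : insert x (e '' (e ⁻¹' C)) = C := by
  rw [image_preimage_eq_inter_range, hx]
  refine (insert_subset hC.1 inter_subset_left).antisymm fun y hy => ?_
  obtain hxy | hxy := (hC.2 hy).eq_or_lt
  exacts [hxy ▸ mem_insert x _, mem_insert_of_mem x ⟨hy, hxy⟩]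

end InsertImage

lemma Cardinal.mk_insert_image_lt {α β : Type u} {x : α} {e : β → α} {κ : Cardinal.{u}}
    (hκ : ℵ₀ ≤ κ) {A : Set β} (hA : #A < κ) : #(insert x (e '' A) : Set α) < κ :=
  mk_insert_le.trans_lt <|
    add_lt_of_lt hκ (mk_image_le.trans_lt hA) (one_lt_aleph0.trans_le hκ)

section Asymorphism

variable {α β : Type u} [PartialOrder α] {κ : Cardinal.{u}} {x : α} {e : β → α}

def insertImage (hκ : ℵ₀ ≤ κ) (hx : range e ⊆ Ioi x) (A : {A : Set β | #A < κ}) :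
    {C : Set α | #C < κ ∧ IsLeast C x} :=
  ⟨insert x (e '' A), mk_insert_image_lt hκ A.2, isLeast_insert_image hx A⟩

variable (hκ : ℵ₀ ≤ κ)

lemma insertImage_bijective (he : e.Injective) (hx : range e = Ioi x) :
    (insertImage hκ hx.subset).Bijective := by
  have hxe := notMem_range_of_range_subset_Ioi hx.subset
  refine Function.bijective_iff_has_inverse.mpr
    ⟨fun C => ⟨e ⁻¹' C, (mk_preimage_of_injective e C he).trans_lt C.2.1⟩, ?_, ?_⟩
  · exact fun A => Subtype.ext (preimage_insert_image he hxe A)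
  · exact fun C => Subtype.ext (insert_image_preimage hx C.2.2)

lemma isCoarse_insertImage (he : e.Injective) (hx : range e ⊆ Ioi x) :
    IsCoarse (subBall (cBall {A : Set β | #A < κ}) {A : Set β | #A < κ})
      (subBall (expBall (pointIdealBall {A : Set α | #A < κ}))
        {A : Set α | #A < κ ∧ IsLeast A x})
      (insertImage hκ hx) := by
  have hxe := notMem_range_of_range_subset_Ioi hx
  refine fun r => ⟨⟨insert x (e '' r), mk_insert_image_lt hκ r.2⟩, ?_⟩
  rintro Z _ ⟨W, hW, rfl⟩
  refine mem_expBall_pointIdealBall_of_symmDiff_subset (mem_insert x _) (mem_insert x _)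
    (mem_insert x _) ?_
  change insert x (e '' Z) ∆ insert x (e '' W) ⊆ insert x (e '' r)
  rw [insert_image_symmDiff he hxe]
  exact (image_mono hW).trans (subset_insert x _)

lemma isEffectivelyProper_insertImage (he : e.Injective) (hx : range e ⊆ Ioi x) :
    IsEffectivelyProper (subBall (cBall {A : Set β | #A < κ}) {A : Set β | #A < κ})
      (subBall (expBall (pointIdealBall {A : Set α | #A < κ}))
        {A : Set α | #A < κ ∧ IsLeast A x})
      (insertImage hκ hx) := by
  have hxe := notMem_range_of_range_subset_Ioi hx
  refine fun s =>
    ⟨⟨e ⁻¹' s, (mk_preimage_of_injective e s he).trans_lt s.2⟩, fun Z W hW => ?_⟩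
  have hsd := symmDiff_subset_of_mem_expBall_pointIdealBall hW
  rw [insertImage, insertImage, insert_image_symmDiff he hxe] at hsd
  exact image_subset_iff.mp hsd

theorem isAsymorphism_insertImage (he : e.Injective) (hx : range e = Ioi x) :
    IsAsymorphism (subBall (cBall {A : Set β | #A < κ}) {A : Set β | #A < κ})
      (subBall (expBall (pointIdealBall {A : Set α | #A < κ}))
        {A : Set α | #A < κ ∧ IsLeast A x})
      (insertImage hκ hx.subset) :=
  ⟨insertImage_bijective hκ he hx, isCoarse_insertImage hκ he hx.subset,
    isEffectivelyProper_insertImage hκ he hx.subset⟩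

end Asymorphism

lemma Cardinal.mk_Ioi_ord_toType {κ : Cardinal.{u}} (hκ : ℵ₀ ≤ κ) (x : κ.ord.ToType) :
    #(Ioi x) = κ := by
  have hinf : ℵ₀ ≤ #κ.ord.ToType := by rwa [mk_ord_toType]
  have : Infinite κ.ord.ToType := infinite_iff.mpr hinf
  have hIic : #(Iic x) < #κ.ord.ToType := by
    rw [← Iio_insert]
    exact mk_insert_le.trans_lt <|
      add_lt_of_lt hinf (mk_Iio_lt x (by simp)) (one_lt_aleph0.trans_le hinf)
  rw [← compl_Iic, mk_compl_of_infinite _ hIic, mk_ord_toType]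

/-- Let `κ` be an infinite cardinal (identified with the set `κ.ord.toType` of ordinals
below `κ`), `K = {A ⊆ κ : |A| < κ}` and `x < κ`. Then there is a bijection from `K` onto
`K_{≥x} = {A ∈ K : A ≠ ∅, min A = x}` which is an asymorphism from the macrocube `K(κ,K)`
(the subballean of `C(κ,K)` on `K`) onto the subballean of `κ_K^♭` on `K_{≥x}`. -/
theorem stmt13 (κ : Cardinal.{u}) (hκ : Cardinal.aleph0 ≤ κ) (x : κ.ord.ToType) :
    ∃ f : {A : Set κ.ord.ToType | #A < κ} → {A : Set κ.ord.ToType | #A < κ ∧ IsLeast A x},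
      IsAsymorphism
        (subBall (cBall {A : Set κ.ord.ToType | #A < κ}) {A : Set κ.ord.ToType | #A < κ})
        (subBall (expBall (pointIdealBall {A : Set κ.ord.ToType | #A < κ}))
          {A : Set κ.ord.ToType | #A < κ ∧ IsLeast A x}) f := by
  obtain ⟨g⟩ : Nonempty (κ.ord.ToType ≃ Ioi x) := by
    rw [← Cardinal.eq, mk_ord_toType, mk_Ioi_ord_toType hκ]
  have hrange : range (Subtype.val ∘ g) = Ioi x := by
    rw [g.surjective.range_comp, Subtype.range_coe]
  exact ⟨_, isAsymorphism_insertImage hκ (Subtype.val_injective.comp g.injective) hrange⟩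
end

section
/- Let κ be a regular infinite cardinal, identified with the set of ordinals below κ, and let K = {A ⊆ κ : |A| < κ}. Then κ_K^♭ asymorphically embeds into κ_{K-ary}^♭: there exists an injective map from K \ {∅} into K \ {∅} that is a coarse embedding from κ_K^♭ into κ_{K-ary}^♭. -/
open Set Cardinal

universe u v

variable {X : Type*} {Y : Type*} {P : Type*} {Q : Type*}

/-!
In `exp(X_{I-ary})` two nonempty sets are `r`-close iff `A ∆ C ⊆ r`; in `exp(X_I)` they must
moreover both meet `r` (unless they are equal). Split `κ` into two disjoint copies via
`e, t : κ → κ` and send `A` to `e(A) ∪ {t(min A)}`. If the images are `s`-close, then either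
`min A ≠ min C` and both markers `t(min A)`, `t(min C)` lie in `s`, or `min A = min C` lies below
a point of `A ∆ C ⊆ e⁻¹(s)`; so `A` and `C` are close with radius `↓e⁻¹(s) ∪ t⁻¹(s)`.
Conversely a point of `A ∩ r` lies above `min A`, so the markers differ only inside `t(↓r)`.
Regularity of `κ` keeps the down-closure `↓r` of a small set small.
-/

open scoped symmDiff

lemma mem_ballSet {X P : Type*} {B : X → P → Set X} {A : Set X} {r : P} {x : X} :
    x ∈ ballSet B A r ↔ ∃ y ∈ A, x ∈ B y r := by
  simp [ballSet]

section BallFormulas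

variable {X : Type*} {I : Set (Set X)} {A C : Set X} {r : I}

lemma ballSet_aryBall (hA : A.Nonempty) : ballSet (aryBall I) A r = A ∪ r := by
  obtain ⟨a, ha⟩ := hA
  ext x
  simp only [mem_ballSet, aryBall, mem_insert_iff, mem_union]
  constructor
  · rintro ⟨y, hy, rfl | hx⟩
    exacts [Or.inl hy, Or.inr hx]
  · rintro (hx | hx)
    exacts [⟨x, hx, Or.inl rfl⟩, ⟨a, ha, Or.inr hx⟩]

lemma mem_expBall_aryBall_iff (hA : A.Nonempty) (hC : C.Nonempty) :
    C ∈ expBall (aryBall I) A r ↔ A ∆ C ⊆ r := by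
  rw [expBall, mem_ofPred_eq, ballSet_aryBall hA, ballSet_aryBall hC]
  exact symmDiff_le_iff.symm

lemma ballSet_pointIdealBall_of_disjoint (h : Disjoint A r) :
    ballSet (pointIdealBall I) A r = A := by
  ext x
  simp only [mem_ballSet, pointIdealBall, mem_insert_iff, mem_ofPred_eq]
  constructor
  · rintro ⟨y, hy, rfl | ⟨-, hyr⟩⟩
    exacts [hy, absurd hyr (disjoint_left.mp h hy)]
  · exact fun hx => ⟨x, hx, Or.inl rfl⟩

lemma ballSet_pointIdealBall_of_not_disjoint (h : ¬Disjoint A r) :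
    ballSet (pointIdealBall I) A r = A ∪ r := by
  obtain ⟨a, ha, har⟩ := not_disjoint_iff.mp h
  ext x
  simp only [mem_ballSet, pointIdealBall, mem_insert_iff, mem_ofPred_eq, mem_union]
  constructor
  · rintro ⟨y, hy, rfl | ⟨hx, -⟩⟩
    exacts [Or.inl hy, Or.inr hx]
  · rintro (hx | hx)
    exacts [⟨x, hx, Or.inl rfl⟩, ⟨a, ha, Or.inr ⟨hx, har⟩⟩]

lemma mem_expBall_pointIdealBall_iff :
    C ∈ expBall (pointIdealBall I) A r ↔
      C = A ∨ (¬Disjoint A r ∧ ¬Disjoint C r ∧ A ∆ C ⊆ r) := by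
  by_cases hA : Disjoint A r <;> by_cases hC : Disjoint C r <;>
    simp only [expBall, mem_ofPred_eq, hA, hC, ballSet_pointIdealBall_of_disjoint,
      ballSet_pointIdealBall_of_not_disjoint, not_true, not_false_eq_true, false_and, and_false,
      true_and, or_false]
  · exact ⟨fun h => h.2.antisymm h.1, fun h => ⟨h.ge, h.le⟩⟩
  · exact ⟨fun h => absurd (hA.mono_left h.2) hC, fun h => absurd (h ▸ hA) hC⟩
  · exact ⟨fun h => absurd (hC.mono_left h.1) hA, fun h => absurd (h ▸ hC) hA⟩
  · refine symmDiff_le_iff.symm.trans (or_iff_right_of_imp ?_).symm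
    rintro rfl
    simp

end BallFormulas

lemma Set.Nonempty.exists_isLeast {X : Type*} [LinearOrder X] [WellFoundedLT X] {A : Set X}
    (hA : A.Nonempty) : ∃ a, IsLeast A a :=
  (exists_minimal_of_wellFoundedLT (· ∈ A) hA).imp fun _ => minimal_iff_isLeast.mp

lemma IsLeast.mem_lowerClosure {X : Type*} [Preorder X] {A r : Set X} {a : X}
    (ha : IsLeast A a) (hA : ¬Disjoint A r) : a ∈ lowerClosure r :=
  let ⟨x, hxA, hxr⟩ := not_disjoint_iff.mp hA
  ⟨x, hxr, ha.2 hxA⟩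

lemma IsLeast.mem_lowerClosure_union_of_ne {X : Type*} [PartialOrder X] {A C u v : Set X}
    {a c : X} (ha : IsLeast A a) (hc : IsLeast C c) (hAC : A ≠ C) (hu : A ∆ C ⊆ u)
    (hv : {x | IsLeast A x} ∆ {x | IsLeast C x} ⊆ v) : a ∈ (lowerClosure u : Set X) ∪ v := by
  by_cases hac : a = c
  · obtain ⟨x, hx⟩ := symmDiff_nonempty.mpr hAC
    refine Or.inl ⟨x, hu hx, ?_⟩
    rcases hx with ⟨hxA, -⟩ | ⟨hxC, -⟩
    exacts [ha.2 hxA, hac ▸ hc.2 hxC]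
  · exact Or.inr (hv (Or.inl ⟨ha, fun hc' => hac (hc'.unique hc)⟩))

section LeastMarkedImage

variable {X Y : Type*} [PartialOrder X] {e t : X → Y} {A C : Set X}

variable (e t) in
/-- `{a | IsLeast A a}` is `{min A}`, and is empty when `A` has no least element. -/
def leastMarkedImage (A : Set X) : Set Y := e '' A ∪ t '' {a | IsLeast A a}

lemma leastMarkedImage_eq {a : X} (ha : IsLeast A a) :
    leastMarkedImage e t A = insert (t a) (e '' A) := by
  have : {x | IsLeast A x} = {a} := eq_singleton_iff_unique_mem.mpr ⟨ha, fun _ hx => hx.unique ha⟩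
  rw [leastMarkedImage, this, image_singleton, union_singleton]

lemma leastMarkedImage_subset_range : leastMarkedImage e t A ⊆ range e ∪ range t :=
  union_subset_union (image_subset_range _ _) (image_subset_range _ _)

variable (het : ∀ a b, e a ≠ t b)
include het

lemma preimage_leastMarkedImage_left (he : e.Injective) : e ⁻¹' leastMarkedImage e t A = A := by
  rw [leastMarkedImage, preimage_union, he.preimage_image, union_eq_left]
  rintro x ⟨a, -, hx⟩
  exact absurd hx.symm (het x a)

lemma preimage_leastMarkedImage_right (ht : t.Injective) :
    t ⁻¹' leastMarkedImage e t A = {a | IsLeast A a} := by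
  rw [leastMarkedImage, preimage_union, ht.preimage_image, union_eq_right]
  rintro x ⟨a, -, hx⟩
  exact absurd hx (het a x)

lemma leastMarkedImage_injective (he : e.Injective) :
    (leastMarkedImage e t : Set X → Set Y).Injective := fun A C h => by
  rw [← preimage_leastMarkedImage_left (A := A) het he, h, preimage_leastMarkedImage_left het he]

lemma symmDiff_leastMarkedImage_subset (he : e.Injective) (ht : t.Injective) {r : Set X}
    (hA : ¬Disjoint A r) (hC : ¬Disjoint C r) (h : A ∆ C ⊆ r) :
    leastMarkedImage e t A ∆ leastMarkedImage e t C ⊆ e '' r ∪ t '' lowerClosure r := by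
  intro y hy
  rcases union_subset leastMarkedImage_subset_range leastMarkedImage_subset_range
    (symmDiff_subset_union hy) with ⟨x, rfl⟩ | ⟨x, rfl⟩
  · replace hy : x ∈ e ⁻¹' (leastMarkedImage e t A ∆ leastMarkedImage e t C) := hy
    rw [preimage_symmDiff, preimage_leastMarkedImage_left het he,
      preimage_leastMarkedImage_left het he] at hy
    exact Or.inl (mem_image_of_mem e (h hy))
  · replace hy : x ∈ t ⁻¹' (leastMarkedImage e t A ∆ leastMarkedImage e t C) := hy
    rw [preimage_symmDiff, preimage_leastMarkedImage_right het ht,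
      preimage_leastMarkedImage_right het ht] at hy
    rcases symmDiff_subset_union hy with hxA | hxC
    exacts [Or.inr (mem_image_of_mem t (IsLeast.mem_lowerClosure hxA hA)),
      Or.inr (mem_image_of_mem t (IsLeast.mem_lowerClosure hxC hC))]

variable {I : Set (Set X)} {J : Set (Set Y)}

lemma leastMarkedImage_mem_expBall_aryBall (he : e.Injective) (ht : t.Injective) {r : I} {s : J}
    (hs : e '' r ∪ t '' lowerClosure (r : Set X) ⊆ s) (hA : A.Nonempty) (hC : C.Nonempty)
    (h : C ∈ expBall (pointIdealBall I) A r) :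
    leastMarkedImage e t C ∈ expBall (aryBall J) (leastMarkedImage e t A) s := by
  have hF {B : Set X} (hB : B.Nonempty) : (leastMarkedImage e t B).Nonempty :=
    (hB.image e).mono subset_union_left
  rw [mem_expBall_aryBall_iff (hF hA) (hF hC)]
  rcases mem_expBall_pointIdealBall_iff.mp h with rfl | ⟨hAr, hCr, hACr⟩
  · simp
  · exact (symmDiff_leastMarkedImage_subset het he ht hAr hCr hACr).trans hs

lemma mem_expBall_pointIdealBall_of_leastMarkedImage (he : e.Injective) (ht : t.Injective)
    {r : I} {s : J} (hr : ↑(lowerClosure (e ⁻¹' s)) ∪ t ⁻¹' s ⊆ r) {a c : X}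
    (ha : IsLeast A a) (hc : IsLeast C c)
    (h : leastMarkedImage e t C ∈ expBall (aryBall J) (leastMarkedImage e t A) s) :
    C ∈ expBall (pointIdealBall I) A r := by
  rw [mem_expBall_aryBall_iff ⟨e a, Or.inl (mem_image_of_mem e ha.1)⟩
    ⟨e c, Or.inl (mem_image_of_mem e hc.1)⟩] at h
  have hu : A ∆ C ⊆ e ⁻¹' s := by
    rw [← preimage_leastMarkedImage_left het he (A := A),
      ← preimage_leastMarkedImage_left het he (A := C), ← preimage_symmDiff]
    exact preimage_mono h
  have hv : {x | IsLeast A x} ∆ {x | IsLeast C x} ⊆ t ⁻¹' s := by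
    rw [← preimage_leastMarkedImage_right het ht (A := A),
      ← preimage_leastMarkedImage_right het ht (A := C), ← preimage_symmDiff]
    exact preimage_mono h
  refine mem_expBall_pointIdealBall_iff.mpr (or_iff_not_imp_left.mpr fun hCA => ⟨?_, ?_, ?_⟩)
  · exact not_disjoint_iff.mpr
      ⟨a, ha.1, hr (ha.mem_lowerClosure_union_of_ne hc (Ne.symm hCA) hu hv)⟩
  · rw [symmDiff_comm] at hu hv
    exact not_disjoint_iff.mpr ⟨c, hc.1, hr (hc.mem_lowerClosure_union_of_ne ha hCA hu hv)⟩
  · exact fun x hx => hr (Or.inl (subset_lowerClosure (hu hx)))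

end LeastMarkedImage

theorem exists_injective_coarseEmbedding_pointIdealBall_aryBall {X Y : Type*} [LinearOrder X]
    [WellFoundedLT X] {I : Set (Set X)} {J : Set (Set Y)} {e t : X → Y} (he : e.Injective)
    (ht : t.Injective) (het : ∀ a b, e a ≠ t b) (hI_union : ∀ A ∈ I, ∀ B ∈ I, A ∪ B ∈ I)
    (hI_lowerClosure : ∀ A ∈ I, ↑(lowerClosure A) ∈ I) (hJ_union : ∀ A ∈ J, ∀ B ∈ J, A ∪ B ∈ J)
    (hJ_singleton : ∀ y, {y} ∈ J) (he_image : ∀ A ∈ I, e '' A ∈ J)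
    (ht_image : ∀ A ∈ I, t '' A ∈ J) (he_preimage : ∀ B ∈ J, e ⁻¹' B ∈ I)
    (ht_preimage : ∀ B ∈ J, t ⁻¹' B ∈ I) :
    ∃ f : (I \ {∅} : Set (Set X)) → (J \ {∅} : Set (Set Y)),
      Function.Injective f ∧
      IsCoarseEmbedding (subBall (expBall (pointIdealBall I)) (I \ {∅}))
        (subBall (expBall (aryBall J)) (J \ {∅})) f := by
  have hne (A : (I \ {∅} : Set (Set X))) : (A : Set X).Nonempty :=
    nonempty_iff_ne_empty.mpr A.2.2
  have hF (A : (I \ {∅} : Set (Set X))) : leastMarkedImage e t A ∈ J \ {∅} := by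
    obtain ⟨a, ha⟩ := (hne A).exists_isLeast
    rw [leastMarkedImage_eq ha, insert_eq]
    exact ⟨hJ_union _ (hJ_singleton _) _ (he_image A A.2.1), (insert_nonempty _ _).ne_empty⟩
  refine ⟨fun A => ⟨_, hF A⟩, fun A C h => Subtype.ext
    (leastMarkedImage_injective het he (congrArg Subtype.val h)), fun r => ?_, fun s => ?_⟩
  · refine ⟨⟨_, hJ_union _ (he_image r r.2) _ (ht_image _ (hI_lowerClosure r r.2))⟩, ?_⟩
    rintro A _ ⟨C, hC, rfl⟩
    exact leastMarkedImage_mem_expBall_aryBall het he ht subset_rfl (hne A) (hne C) hC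
  · refine ⟨⟨_, hI_union _ (hI_lowerClosure _ (he_preimage s s.2)) _ (ht_preimage s s.2)⟩, ?_⟩
    intro A C hC
    obtain ⟨a, ha⟩ := (hne A).exists_isLeast
    obtain ⟨c, hc⟩ := (hne C).exists_isLeast
    exact mem_expBall_pointIdealBall_of_leastMarkedImage het he ht subset_rfl ha hc hC

open scoped Ordinal in
theorem Cardinal.mk_lowerClosure_lt {α : Type u} [LinearOrder α] [WellFoundedLT α]
    (hα : (#α).IsRegular) (h : (#α).ord = typeLT α) {A : Set α} (hA : #A < #α) :
    #(lowerClosure A : Set α) < #α := by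
  rw [coe_lowerClosure]
  exact (card_biUnion_lt_iff_forall_of_isRegular hα hA).mpr fun a _ =>
    mk_Iic_lt a h hα.aleph0_le

/-- Let `κ` be a regular infinite cardinal (identified with the set `κ.ord.toType` of
ordinals below `κ`) and `K = {A ⊆ κ : |A| < κ}`. Then `κ_K^♭` asymorphically embeds into
`κ_{K-ary}^♭`: there is an injective coarse embedding from the subballean of `exp(κ_K)` on
`K \ {∅}` into the subballean of `exp(κ_{K-ary})` on `K \ {∅}`. -/
theorem stmt14 (κ : Cardinal.{u}) (hκ : κ.IsRegular) :
    ∃ f : ({A : Set κ.ord.ToType | #A < κ} \ {∅} : Set (Set κ.ord.ToType)) →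
        ({A : Set κ.ord.ToType | #A < κ} \ {∅} : Set (Set κ.ord.ToType)),
      Function.Injective f ∧
      IsCoarseEmbedding
        (subBall (expBall (pointIdealBall {A : Set κ.ord.ToType | #A < κ}))
          ({A : Set κ.ord.ToType | #A < κ} \ {∅}))
        (subBall (expBall (aryBall {A : Set κ.ord.ToType | #A < κ}))
          ({A : Set κ.ord.ToType | #A < κ} \ {∅})) f := by
  have hX : #κ.ord.ToType = κ := by simp
  obtain ⟨j⟩ : Nonempty (κ.ord.ToType ⊕ κ.ord.ToType ≃ κ.ord.ToType) := Cardinal.eq.mp <| by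
    simp [hX, add_eq_self hκ.aleph0_le]
  have hinl : (j ∘ Sum.inl).Injective := j.injective.comp Sum.inl_injective
  have hinr : (j ∘ Sum.inr).Injective := j.injective.comp Sum.inr_injective
  have hunion : ∀ A ∈ {A : Set κ.ord.ToType | #A < κ}, ∀ B ∈ {A : Set κ.ord.ToType | #A < κ},
      A ∪ B ∈ {A : Set κ.ord.ToType | #A < κ} :=
    fun A hA B hB => (mk_union_le A B).trans_lt (add_lt_of_lt hκ.aleph0_le hA hB)
  refine exists_injective_coarseEmbedding_pointIdealBall_aryBall hinl hinr
    (fun a b h => Sum.inl_ne_inr (j.injective h)) hunion (fun A hA => ?_) hunion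
    (fun y => ?_) (fun A hA => mk_image_le.trans_lt hA) (fun A hA => mk_image_le.trans_lt hA)
    (fun B hB => (mk_preimage_of_injective _ _ hinl).trans_lt hB)
    (fun B hB => (mk_preimage_of_injective _ _ hinr).trans_lt hB)
  · have := mk_lowerClosure_lt (A := A) (by rwa [hX]) (by simp) (by rwa [hX])
    rwa [hX] at this
  · simpa using one_lt_aleph0.trans_le hκ.aleph0_le
end
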